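/- arXiv:1912.02957 — 6 statements merged into one kernel-verified Lean document; each statement's English description precedes it below -/
import Mathlib

section
/- Color-merging for a single stochastic six-vertex: let C = {c, c+1, ..., N} be a contiguous subset of colors with complement C̄, and define [k]_C = c if k ∈ C and [k]_C = k otherwise. Then for any incoming colors i, j and any outgoing color l ∈ C̄, the sum over k ∈ C of R_z(i,j;k,l) equals R_z([i]_C,[j]_C; c, l). Similarly, for any outgoing color k ∈ C̄, the sum over l ∈ C of R_z(i,j;k,l) equals R_z([i]_C,[j]_C; k, c). Moreover the double sum over k ∈ C and l ∈ C of R_z(i,j;k,l) equals the indicator that both i ∈ C and j ∈ C. -/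
/-- The stochastic R-matrix of the colored six-vertex model:
`Rweight q z a b c d` is the weight `R_z(a,b;c,d)` of a vertex with incoming
colors `a` (from below) and `b` (from the left), and outgoing colors
`c` (on top) and `d` (to the right). -/
noncomputable def Rweight {N : ℕ} (q z : ℝ) (a b c d : Fin (N + 1)) : ℝ :=
  if a = b ∧ b = c ∧ c = d then 1
  else if b < a ∧ a = c ∧ b = d then q * (1 - z) / (1 - q * z)
  else if a < b ∧ a = c ∧ b = d then (1 - z) / (1 - q * z)
  else if b < a ∧ a = d ∧ b = c then (1 - q) / (1 - q * z)
  else if a < b ∧ a = d ∧ b = c then (1 - q) * z / (1 - q * z)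
  else 0

/-- The color projection `[k]_C` associated with the contiguous set of colors
`C = {c, c+1, ..., N}`: `[k]_C = c` if `k ∈ C` and `[k]_C = k` otherwise. -/
def colorProj {N : ℕ} (c k : Fin (N + 1)) : Fin (N + 1) :=
  if c ≤ k then c else k

/-!
Color merging holds for every monotone relabelling `f` of the colors: summing `R_z(i,j;k,l)`
over the fibres `f k = m`, `f l = n` gives `R_z(f i, f j; m, n)`. The weight `R_z(i,j;·,·)` is
supported on `(i,j)` and `(j,i)`, so the double sum has at most two terms. If `f i ≠ f j`, then
`f` preserves the order of `i` and `j`, which is all the weight depends on; if `f i = f j`, the two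
terms add up to `1` by stochasticity. The theorem is the case `f = [·]_C`, whose fibre over `c`
is `C` and whose other fibres are singletons.
-/

lemma Finset.sum_sum_ite_and_eq {ι κ M : Type*} [AddCommMonoid M] [DecidableEq ι]
    [DecidableEq κ] (S : Finset ι) (T : Finset κ) (a : ι) (b : κ) (x : M) :
    ∑ k ∈ S, ∑ l ∈ T, (if k = a ∧ l = b then x else 0) =
      if a ∈ S ∧ b ∈ T then x else 0 := by
  simp only [ite_and, Finset.sum_ite_irrel, Finset.sum_ite_eq', Finset.sum_const_zero]

lemma Monotone.lt_iff_lt_of_ne {α β : Type*} [LinearOrder α] [PartialOrder β] {f : α → β}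
    (hf : Monotone f) {a b : α} (hfab : f a ≠ f b) : a < b ↔ f a < f b :=
  ⟨fun hab => (hf hab.le).lt_of_ne hfab, hf.reflect_lt⟩

section Rweight

variable {N : ℕ} (q z : ℝ)

lemma Rweight_eq_zero {a b k l : Fin (N + 1)}
    (h : ¬((k = a ∧ l = b) ∨ (k = b ∧ l = a))) : Rweight q z a b k l = 0 := by
  unfold Rweight
  split_ifs <;> first | rfl | (exfalso; omega)

lemma Rweight_self (a k l : Fin (N + 1)) :
    Rweight q z a a k l = if k = a ∧ l = a then 1 else 0 := by
  unfold Rweight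
  split_ifs <;> first | rfl | omega

lemma Rweight_out_self (a b k : Fin (N + 1)) :
    Rweight q z a b k k = if a = k ∧ b = k then 1 else 0 := by
  unfold Rweight
  split_ifs <;> first | rfl | omega

lemma Rweight_of_ne {a b : Fin (N + 1)} (hab : a ≠ b) (k l : Fin (N + 1)) :
    Rweight q z a b k l =
      (if k = a ∧ l = b then Rweight q z a b a b else 0) +
        (if k = b ∧ l = a then Rweight q z a b b a else 0) := by
  by_cases hs : k = a ∧ l = b
  · obtain ⟨rfl, rfl⟩ := hs
    simp [hab]
  by_cases ht : k = b ∧ l = a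
  · obtain ⟨rfl, rfl⟩ := ht
    simp [hab, Ne.symm hab]
  rw [if_neg hs, if_neg ht, Rweight_eq_zero q z (by tauto), add_zero]

lemma Rweight_straight_add_Rweight_swap (h : q * z ≠ 1) {a b : Fin (N + 1)} (hab : a ≠ b) :
    Rweight q z a b a b + Rweight q z a b b a = 1 := by
  have hqz : 1 - q * z ≠ 0 := sub_ne_zero.mpr (Ne.symm h)
  unfold Rweight
  rcases hab.lt_or_gt with hab' | hab' <;>
    simp only [hab', hab, hab'.not_gt, true_and, false_and, and_true, if_true, if_false] <;>
    rw [← add_div, div_eq_one_iff_eq hqz] <;> ring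

lemma Rweight_straight_comp {f : Fin (N + 1) → Fin (N + 1)} (hf : Monotone f) {a b : Fin (N + 1)}
    (hfab : f a ≠ f b) : Rweight q z (f a) (f b) (f a) (f b) = Rweight q z a b a b := by
  have hlt := hf.lt_iff_lt_of_ne hfab
  have hgt := hf.lt_iff_lt_of_ne hfab.symm
  unfold Rweight
  split_ifs <;> first | rfl | omega

lemma Rweight_swap_comp {f : Fin (N + 1) → Fin (N + 1)} (hf : Monotone f) {a b : Fin (N + 1)}
    (hfab : f a ≠ f b) : Rweight q z (f a) (f b) (f b) (f a) = Rweight q z a b b a := by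
  have hlt := hf.lt_iff_lt_of_ne hfab
  have hgt := hf.lt_iff_lt_of_ne hfab.symm
  unfold Rweight
  split_ifs <;> first | rfl | omega

lemma sum_sum_Rweight_self (a : Fin (N + 1)) (S T : Finset (Fin (N + 1))) :
    ∑ k ∈ S, ∑ l ∈ T, Rweight q z a a k l = if a ∈ S ∧ a ∈ T then 1 else 0 := by
  simp only [Rweight_self, Finset.sum_sum_ite_and_eq]

lemma sum_sum_Rweight_of_ne {a b : Fin (N + 1)} (hab : a ≠ b) (S T : Finset (Fin (N + 1))) :
    ∑ k ∈ S, ∑ l ∈ T, Rweight q z a b k l =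
      (if a ∈ S ∧ b ∈ T then Rweight q z a b a b else 0) +
        (if b ∈ S ∧ a ∈ T then Rweight q z a b b a else 0) := by
  rw [Finset.sum_congr rfl fun k _ => Finset.sum_congr rfl fun l _ => Rweight_of_ne q z hab k l]
  simp only [Finset.sum_add_distrib, Finset.sum_sum_ite_and_eq]

theorem Rweight_merge (h : q * z ≠ 1) {f : Fin (N + 1) → Fin (N + 1)} (hf : Monotone f)
    (i j m n : Fin (N + 1)) :
    ∑ k ∈ Finset.univ.filter (fun k => f k = m),
      ∑ l ∈ Finset.univ.filter (fun l => f l = n), Rweight q z i j k l =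
      Rweight q z (f i) (f j) m n := by
  rcases eq_or_ne i j with rfl | hij
  · rw [sum_sum_Rweight_self, Rweight_self]
    simp only [Finset.mem_filter, Finset.mem_univ, true_and, eq_comm]
  rw [sum_sum_Rweight_of_ne q z hij]
  simp only [Finset.mem_filter, Finset.mem_univ, true_and]
  rcases eq_or_ne (f i) (f j) with hf_eq | hf_ne
  · rw [← hf_eq, Rweight_self, ite_add_ite, Rweight_straight_add_Rweight_swap q z h hij]
    simp only [eq_comm (a := m), eq_comm (a := n), zero_add]
  · rw [Rweight_of_ne q z hf_ne, Rweight_straight_comp q z hf hf_ne,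
      Rweight_swap_comp q z hf hf_ne]
    simp only [eq_comm (a := m), eq_comm (a := n)]

end Rweight

lemma colorProj_monotone {N : ℕ} (c : Fin (N + 1)) : Monotone (colorProj c) := by
  intro k l hkl
  unfold colorProj
  split_ifs <;> omega

lemma colorProj_eq_self_iff {N : ℕ} (c k : Fin (N + 1)) : colorProj c k = c ↔ c ≤ k := by
  unfold colorProj
  split_ifs <;> omega

lemma colorProj_eq_iff_of_lt {N : ℕ} {c l : Fin (N + 1)} (hl : l < c) (k : Fin (N + 1)) :
    colorProj c k = l ↔ k = l := by
  unfold colorProj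
  split_ifs <;> omega

/-- Color-merging for a single stochastic six-vertex, with
`C = {c, c+1, ..., N}` and complement `C̄ = {0, ..., c-1}`. -/
theorem Rweight_color_merging {N : ℕ} (q z : ℝ) (h : q * z ≠ 1)
    (c i j : Fin (N + 1)) :
    (∀ l : Fin (N + 1), l < c →
        ∑ k ∈ Finset.univ.filter (fun k : Fin (N + 1) => c ≤ k),
            Rweight q z i j k l
          = Rweight q z (colorProj c i) (colorProj c j) c l)
    ∧ (∀ k : Fin (N + 1), k < c →
        ∑ l ∈ Finset.univ.filter (fun l : Fin (N + 1) => c ≤ l),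
            Rweight q z i j k l
          = Rweight q z (colorProj c i) (colorProj c j) k c)
    ∧ (∑ k ∈ Finset.univ.filter (fun k : Fin (N + 1) => c ≤ k),
          ∑ l ∈ Finset.univ.filter (fun l : Fin (N + 1) => c ≤ l),
            Rweight q z i j k l)
        = if c ≤ i ∧ c ≤ j then 1 else 0 := by
  have merge := Rweight_merge q z h (colorProj_monotone c) i j
  have hC : Finset.univ.filter (fun k => c ≤ k) =
      Finset.univ.filter (fun k => colorProj c k = c) := by
    simp only [colorProj_eq_self_iff]
  have hfiber : ∀ l < c, Finset.univ.filter (fun k => colorProj c k = l) = {l} := fun l hl => by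
    ext k
    simp [colorProj_eq_iff_of_lt hl]
  refine ⟨fun l hl => ?_, fun k hk => ?_, ?_⟩
  · simpa only [← hC, hfiber l hl, Finset.sum_singleton] using merge c l
  · simpa only [← hC, hfiber k hk, Finset.sum_singleton] using merge k c
  · simp only [hC, merge, Rweight_out_self, colorProj_eq_self_iff]
end

section
/- Let 0 < q < 1 and let u : I → ℂ be a function defined in a neighborhood of 1 with lim_{q→1} u(q) = u where 0 < u < 1. Then for any real a, b, the limit as q → 1 of (q^a u(q); q)_∞ / (q^b u(q); q)_∞ equals (1-u)^{b-a}. -/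
/-!
Put `φ(x) = log (qˣ v; q)_∞ = ∑ᵢ log (1 - qˣ⁺ⁱ v)`. Each summand is concave in `x`, hence so is
`φ`, and `φ(x) - φ(x + 1) = log (1 - qˣ v)`. For `a ≤ b`, comparing the slope of `φ` on `[a, b]`
with its slopes on `[a - 1, a]` and `[b, b + 1]` traps `φ(a) - φ(b)` between
`(b - a) log (1 - q^(a-1) v)` and `(b - a) log (1 - q^b v)`, and with `v = u(q)` both bounds tend
to `(b - a) log (1 - u)` as `q → 1`.
-/

open Real Filter Set Topology

theorem ConcaveOn.tsum {ι E : Type*} [AddCommGroup E] [Module ℝ E] {s : Set E}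
    {f : ι → E → ℝ} (hs : Convex ℝ s) (hf : ∀ i, ConcaveOn ℝ s (f i))
    (hsum : ∀ x ∈ s, Summable fun i => f i x) :
    ConcaveOn ℝ s fun x => ∑' i, f i x := by
  refine ⟨hs, fun x hx y hy a b ha hb hab => ?_⟩
  simp only [smul_eq_mul, ← tsum_mul_left]
  rw [← Summable.tsum_add ((hsum x hx).mul_left a) ((hsum y hy).mul_left b)]
  exact Summable.tsum_le_tsum (fun i => (hf i).2 hx hy ha hb hab)
    (((hsum x hx).mul_left a).add ((hsum y hy).mul_left b)) (hsum _ (hs hx hy ha hb hab))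

theorem ConcaveOn.mul_sub_le_sub_and_sub_le_mul_sub {s : Set ℝ} {φ : ℝ → ℝ}
    (hφ : ConcaveOn ℝ s φ) {x y : ℝ} (hx : x - 1 ∈ s) (hy : y + 1 ∈ s) (hxy : x ≤ y) :
    (y - x) * (φ (y + 1) - φ y) ≤ φ y - φ x ∧ φ y - φ x ≤ (y - x) * (φ x - φ (x - 1)) := by
  rcases hxy.eq_or_lt with rfl | hlt
  · simp
  have hxs : x ∈ s := hφ.1.ordConnected.out hx hy ⟨by linarith, by linarith⟩
  have hys : y ∈ s := hφ.1.ordConnected.out hx hy ⟨by linarith, by linarith⟩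
  have hpos : 0 < y - x := sub_pos.2 hlt
  have right := hφ.slope_anti_adjacent hxs hy hlt (lt_add_one y)
  have left := hφ.slope_anti_adjacent hx hys (sub_one_lt x) hlt
  rw [add_sub_cancel_left, div_one, le_div_iff₀ hpos] at right
  rw [sub_sub_cancel, div_one, div_le_iff₀ hpos] at left
  constructor <;> linarith

section Rpow

variable {q v : ℝ}

theorem convex_setOf_rpow_mul_lt (hq : 0 < q) (hv : 0 ≤ v) (r : ℝ) :
    Convex ℝ {x : ℝ | q ^ x * v < r} := by
  simpa [mul_comm] using ((convexOn_rpow_left hq).smul hv).convex_lt r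

theorem concaveOn_log_one_sub_rpow_mul {s : Set ℝ} (hs : Convex ℝ s) (hq : 0 < q) (hv : 0 ≤ v)
    (hsv : ∀ x ∈ s, q ^ x * v < 1) : ConcaveOn ℝ s fun x => log (1 - q ^ x * v) := by
  refine ⟨hs, fun x hx y hy a b ha hb hab => ?_⟩
  have hpos : ∀ z ∈ s, 0 < 1 - q ^ z * v := fun z hz => sub_pos.2 (hsv z hz)
  have hrpow := (convexOn_rpow_left hq).2 (mem_univ x) (mem_univ y) ha hb hab
  simp only [smul_eq_mul] at hrpow ⊢
  calc a * log (1 - q ^ x * v) + b * log (1 - q ^ y * v)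
      ≤ log (a * (1 - q ^ x * v) + b * (1 - q ^ y * v)) :=
        strictConcaveOn_log_Ioi.concaveOn.2 (hpos x hx) (hpos y hy) ha hb hab
    _ ≤ log (1 - q ^ (a * x + b * y) * v) := by
        apply log_le_log (convex_Ioi (0 : ℝ) (hpos x hx) (hpos y hy) ha hb hab)
        linear_combination mul_le_mul_of_nonneg_right hrpow hv + hab

end Rpow

/-- `logQPoch q z = log (z; q)_∞`. -/
noncomputable def logQPoch (q z : ℝ) : ℝ := ∑' i : ℕ, log (1 - z * q ^ i)

section LogQPoch

variable {q z : ℝ}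

theorem summable_log_one_sub_mul_pow (hq : |q| < 1) (z : ℝ) :
    Summable fun i : ℕ => log (1 - z * q ^ i) := by
  simpa only [← sub_eq_add_neg] using
    Real.summable_log_one_add_of_summable ((summable_geometric_of_abs_lt_one hq).mul_left z).neg

theorem tprod_one_sub_mul_pow (hq0 : 0 ≤ q) (hq1 : q < 1) (hz : z < 1) :
    ∏' i : ℕ, (1 - z * q ^ i) = exp (logQPoch q z) := by
  have hfactor : ∀ i : ℕ, 0 < 1 - z * q ^ i := fun i => by
    have := pow_le_one₀ hq0 hq1.le (n := i)
    have := pow_nonneg hq0 i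
    rcases le_total z 0 with h | h <;> nlinarith
  rw [logQPoch, Real.rexp_tsum_eq_tprod hfactor
    (summable_log_one_sub_mul_pow (abs_lt.2 ⟨by linarith, hq1⟩) z)]

theorem logQPoch_sub_logQPoch_mul (hq : |q| < 1) (z : ℝ) :
    logQPoch q z - logQPoch q (z * q) = log (1 - z) := by
  rw [logQPoch, (summable_log_one_sub_mul_pow hq z).tsum_eq_zero_add, logQPoch]
  simp [pow_succ, mul_assoc, mul_comm q]

theorem logQPoch_rpow_mul_sub_rpow_add_one_mul (hq0 : 0 < q) (hq1 : q < 1) (x v : ℝ) :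
    logQPoch q (q ^ x * v) - logQPoch q (q ^ (x + 1) * v) = log (1 - q ^ x * v) := by
  rw [rpow_add_one hq0.ne', mul_right_comm]
  exact logQPoch_sub_logQPoch_mul (abs_lt.2 ⟨by linarith, hq1⟩) _

theorem concaveOn_logQPoch_rpow_mul {v : ℝ} (hq0 : 0 < q) (hq1 : q < 1) (hv : 0 ≤ v) :
    ConcaveOn ℝ {x : ℝ | q ^ x * v < 1} fun x => logQPoch q (q ^ x * v) := by
  have hs := convex_setOf_rpow_mul_lt hq0 hv 1
  refine ConcaveOn.tsum hs (fun i => ?_) fun x _ =>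
    summable_log_one_sub_mul_pow (abs_lt.2 ⟨by linarith, hq1⟩) _
  simp_rw [mul_assoc]
  refine concaveOn_log_one_sub_rpow_mul hs hq0 (by positivity) fun x (hx : q ^ x * v < 1) => ?_
  calc q ^ x * (v * q ^ i) ≤ q ^ x * v :=
        mul_le_mul_of_nonneg_left (mul_le_of_le_one_right hv (pow_le_one₀ hq0.le hq1.le))
          (rpow_nonneg hq0.le x)
    _ < 1 := hx

theorem logQPoch_rpow_mul_sub_mem_Icc {v a b : ℝ} (hq0 : 0 < q) (hq1 : q < 1) (hv : 0 ≤ v)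
    (hab : a ≤ b) (ha : q ^ (a - 1) * v < 1) :
    logQPoch q (q ^ a * v) - logQPoch q (q ^ b * v) ∈
      Icc ((b - a) * log (1 - q ^ (a - 1) * v)) ((b - a) * log (1 - q ^ b * v)) := by
  have hb : q ^ (b + 1) * v < 1 := (mul_le_mul_of_nonneg_right
    (rpow_le_rpow_of_exponent_ge hq0 hq1.le (by linarith)) hv).trans_lt ha
  obtain ⟨hupper, hlower⟩ :=
    (concaveOn_logQPoch_rpow_mul hq0 hq1 hv).mul_sub_le_sub_and_sub_le_mul_sub ha hb hab
  have hstep_a := logQPoch_rpow_mul_sub_rpow_add_one_mul hq0 hq1 (a - 1) v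
  have hstep_b := logQPoch_rpow_mul_sub_rpow_add_one_mul hq0 hq1 b v
  rw [sub_add_cancel] at hstep_a
  exact ⟨by linear_combination hlower - (b - a) * hstep_a,
    by linear_combination hupper + (b - a) * hstep_b⟩

end LogQPoch

section Limits

variable {s : Set ℝ} {u : ℝ → ℝ} {u0 : ℝ}

theorem tendsto_rpow_mul (hu : Tendsto u (𝓝[s] 1) (𝓝 u0)) (y : ℝ) :
    Tendsto (fun q => q ^ y * u q) (𝓝[s] 1) (𝓝 u0) := by
  have hpow : Tendsto (fun q : ℝ => q ^ y) (𝓝[s] 1) (𝓝 1) := by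
    simpa using ((continuousAt_rpow_const 1 y (Or.inl one_ne_zero)).tendsto).mono_left
      nhdsWithin_le_nhds
  simpa using hpow.mul hu

theorem tendsto_log_one_sub_rpow_mul (hu : Tendsto u (𝓝[s] 1) (𝓝 u0)) (hu1 : u0 ≠ 1) (y : ℝ) :
    Tendsto (fun q => log (1 - q ^ y * u q)) (𝓝[s] 1) (𝓝 (log (1 - u0))) :=
  ((tendsto_rpow_mul hu y).const_sub 1).log (sub_ne_zero.2 hu1.symm)

theorem tendsto_logQPoch_rpow_mul_sub_of_le {a b : ℝ} (hab : a ≤ b) (hu0 : 0 < u0)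
    (hu1 : u0 < 1) (hu : Tendsto u (𝓝[Ioo 0 1] 1) (𝓝 u0)) :
    Tendsto (fun q => logQPoch q (q ^ a * u q) - logQPoch q (q ^ b * u q)) (𝓝[Ioo 0 1] 1)
      (𝓝 ((b - a) * log (1 - u0))) := by
  have hbounds : ∀ᶠ q in 𝓝[Ioo 0 1] 1, logQPoch q (q ^ a * u q) - logQPoch q (q ^ b * u q) ∈
      Icc ((b - a) * log (1 - q ^ (a - 1) * u q)) ((b - a) * log (1 - q ^ b * u q)) := by
    filter_upwards [eventually_mem_nhdsWithin, hu.eventually (eventually_gt_nhds hu0),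
      (tendsto_rpow_mul hu (a - 1)).eventually (eventually_lt_nhds hu1)] with q ⟨hq0, hq1⟩ hv ha
    exact logQPoch_rpow_mul_sub_mem_Icc hq0 hq1 hv.le hab ha
  exact tendsto_of_tendsto_of_tendsto_of_le_of_le'
    ((tendsto_log_one_sub_rpow_mul hu hu1.ne (a - 1)).const_mul (b - a))
    ((tendsto_log_one_sub_rpow_mul hu hu1.ne b).const_mul (b - a))
    (hbounds.mono fun _ h => h.1) (hbounds.mono fun _ h => h.2)

theorem tendsto_logQPoch_rpow_mul_sub (a b : ℝ) (hu0 : 0 < u0) (hu1 : u0 < 1)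
    (hu : Tendsto u (𝓝[Ioo 0 1] 1) (𝓝 u0)) :
    Tendsto (fun q => logQPoch q (q ^ a * u q) - logQPoch q (q ^ b * u q)) (𝓝[Ioo 0 1] 1)
      (𝓝 ((b - a) * log (1 - u0))) := by
  rcases le_total a b with hab | hba
  · exact tendsto_logQPoch_rpow_mul_sub_of_le hab hu0 hu1 hu
  · simpa [neg_sub, ← neg_mul] using (tendsto_logQPoch_rpow_mul_sub_of_le hba hu0 hu1 hu).neg

end Limits

/-- Limit of a ratio of infinite q-Pochhammer symbols as `q → 1⁻`:
if `u(q) → u₀ ∈ (0,1)`, then `(qᵃ u(q); q)_∞ / (qᵇ u(q); q)_∞ → (1-u₀)^(b-a)`. -/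
theorem qPochInf_ratio_limit (a b u0 : ℝ) (hu0 : 0 < u0) (hu1 : u0 < 1)
    (u : ℝ → ℝ)
    (hu : Filter.Tendsto u (nhdsWithin 1 (Set.Ioo (0 : ℝ) 1)) (nhds u0)) :
    Filter.Tendsto
      (fun q : ℝ =>
        (∏' i : ℕ, (1 - q ^ a * u q * q ^ i)) /
          (∏' i : ℕ, (1 - q ^ b * u q * q ^ i)))
      (nhdsWithin 1 (Set.Ioo (0 : ℝ) 1))
      (nhds ((1 - u0) ^ (b - a))) := by
  have hexp : ∀ᶠ q in 𝓝[Ioo 0 1] 1,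
      exp (logQPoch q (q ^ a * u q) - logQPoch q (q ^ b * u q)) =
        (∏' i : ℕ, (1 - q ^ a * u q * q ^ i)) / ∏' i : ℕ, (1 - q ^ b * u q * q ^ i) := by
    filter_upwards [eventually_mem_nhdsWithin,
      (tendsto_rpow_mul hu a).eventually (eventually_lt_nhds hu1),
      (tendsto_rpow_mul hu b).eventually (eventually_lt_nhds hu1)] with q ⟨hq0, hq1⟩ ha hb
    rw [tprod_one_sub_mul_pow hq0.le hq1 ha, tprod_one_sub_mul_pow hq0.le hq1 hb, exp_sub]
  rw [rpow_def_of_pos (sub_pos.2 hu1), mul_comm]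
  exact (tendsto_logQPoch_rpow_mul_sub a b hu0 hu1 hu).rexp.congr' hexp
end

section
/- For any real α > 0 and all x with 0 < x < α, the function f(x) = Li₂(e^{-x}) + Li₂(e^{x-α}) satisfies f''(x) > -1, where Li₂ is the dilogarithm. -/
/-- The dilogarithm `Li₂(u) = Σ_{n≥1} uⁿ/n²`. -/
noncomputable def dilog (u : ℝ) : ℝ :=
  ∑' n : ℕ, u ^ (n + 1) / ((n : ℝ) + 1) ^ 2

open Real

lemma dilog_hasDerivAt {u : ℝ} (h0 : 0 < u) (h1 : u < 1) :
    HasDerivAt dilog (-Real.log (1 - u) / u) u := by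
  set r : ℝ := (1 + u) / 2 with hr
  have hr0 : 0 < r := by positivity
  have hur : u < r := by rw [hr]; linarith
  have hr1 : r < 1 := by rw [hr]; linarith
  have key : HasDerivAt dilog (∑' n : ℕ, u ^ n / ((n : ℝ) + 1)) u := by
    apply hasDerivAt_tsum_of_isPreconnected (u := fun n : ℕ => r ^ n)
      (g := fun (n : ℕ) (y : ℝ) => y ^ (n + 1) / ((n : ℝ) + 1) ^ 2)
      (g' := fun (n : ℕ) (y : ℝ) => y ^ n / ((n : ℝ) + 1))
      (t := Metric.ball (0 : ℝ) r) (y₀ := 0)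
    · exact summable_geometric_of_lt_one hr0.le hr1
    · exact Metric.isOpen_ball
    · exact (convex_ball (0:ℝ) r).isPreconnected
    · intro n y _
      have : HasDerivAt (fun y : ℝ => y ^ (n + 1)) (((n : ℝ) + 1) * y ^ n) y := by
        simpa using hasDerivAt_pow (n + 1) y
      have := this.div_const (((n : ℝ) + 1) ^ 2)
      refine this.congr_deriv ?_
      have hn : ((n : ℝ) + 1) ≠ 0 := by positivity
      field_simp
    · intro n y hy
      rw [Metric.mem_ball, Real.dist_eq, sub_zero] at hy
      have h1 : |y ^ n / ((n : ℝ) + 1)| ≤ |y| ^ n := by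
        rw [abs_div, abs_pow]
        have hn : (1 : ℝ) ≤ |((n : ℝ) + 1)| := by
          rw [abs_of_pos (by positivity)]; simp
        calc |y| ^ n / |((n : ℝ) + 1)| ≤ |y| ^ n / 1 :=
              div_le_div_of_nonneg_left (by positivity) one_pos hn
          _ = |y| ^ n := by ring
      calc ‖y ^ n / ((n : ℝ) + 1)‖ ≤ |y| ^ n := h1
        _ ≤ r ^ n := pow_le_pow_left₀ (abs_nonneg _) hy.le n
    · exact Metric.mem_ball_self hr0
    · simpa using summable_zero
    · rw [Metric.mem_ball, Real.dist_eq, sub_zero, abs_of_pos h0]; exact hur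
  have habs : |u| < 1 := by rw [abs_of_pos h0]; exact h1
  have hsum := (hasSum_pow_div_log_of_abs_lt_one habs).mul_left u⁻¹
  have hu : u ≠ 0 := ne_of_gt h0
  have heq : (fun n : ℕ => u⁻¹ * (u ^ (n + 1) / (n + 1))) =
      fun n : ℕ => u ^ n / ((n : ℝ) + 1) := by
    funext n
    field_simp
    ring
  rw [heq] at hsum
  have : (∑' n : ℕ, u ^ n / ((n : ℝ) + 1)) = u⁻¹ * -Real.log (1 - u) := hsum.tsum_eq
  rw [this] at key
  convert key using 1
  field_simp

lemma deriv_f_eq {α : ℝ} {t : ℝ} (ht0 : 0 < t) (htα : t < α) :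
    HasDerivAt (fun t : ℝ => dilog (Real.exp (-t)) + dilog (Real.exp (t - α)))
      (Real.log (1 - Real.exp (-t)) - Real.log (1 - Real.exp (t - α))) t := by
  have he1 : Real.exp (-t) < 1 := Real.exp_lt_one_iff.mpr (by linarith)
  have he2 : Real.exp (t - α) < 1 := Real.exp_lt_one_iff.mpr (by linarith)
  have hd1 : HasDerivAt (fun t : ℝ => Real.exp (-t)) (-Real.exp (-t)) t := by
    simpa [Function.comp_def] using (Real.hasDerivAt_exp (-t)).comp t ((hasDerivAt_id t).neg)
  have hd2 : HasDerivAt (fun t : ℝ => Real.exp (t - α)) (Real.exp (t - α)) t := by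
    simpa [Function.comp_def] using (Real.hasDerivAt_exp (t - α)).comp t ((hasDerivAt_id t).sub_const α)
  have h1 := (dilog_hasDerivAt (Real.exp_pos _) he1).comp t hd1
  have h2 := (dilog_hasDerivAt (Real.exp_pos _) he2).comp t hd2
  have := h1.add h2
  refine this.congr_deriv ?_
  have hne1 : Real.exp (-t) ≠ 0 := (Real.exp_pos _).ne'
  have hne2 : Real.exp (t - α) ≠ 0 := (Real.exp_pos _).ne'
  field_simp
  ring

/-- For `0 < x < α`, the second derivative of
`f(x) = Li₂(e^{-x}) + Li₂(e^{x-α})` exceeds `-1`. -/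
theorem dilog_second_deriv_gt_neg_one (α x : ℝ) (hα : 0 < α)
    (hx0 : 0 < x) (hxα : x < α) :
    -1 < deriv (deriv fun t : ℝ => dilog (Real.exp (-t)) + dilog (Real.exp (t - α))) x := by
  have hmem : x ∈ Set.Ioo (0 : ℝ) α := ⟨hx0, hxα⟩
  have hopen : IsOpen (Set.Ioo (0 : ℝ) α) := isOpen_Ioo
  have heq : (deriv fun t : ℝ => dilog (Real.exp (-t)) + dilog (Real.exp (t - α))) =ᶠ[nhds x]
      (fun t : ℝ => Real.log (1 - Real.exp (-t)) - Real.log (1 - Real.exp (t - α))) := by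
    filter_upwards [hopen.mem_nhds hmem] with t ht
    exact (deriv_f_eq ht.1 ht.2).deriv
  rw [heq.deriv_eq]
  have he1 : Real.exp (-x) < 1 := Real.exp_lt_one_iff.mpr (by linarith)
  have he2 : Real.exp (x - α) < 1 := Real.exp_lt_one_iff.mpr (by linarith)
  have hd1 : HasDerivAt (fun t : ℝ => Real.exp (-t)) (-Real.exp (-x)) x := by
    simpa [Function.comp_def] using (Real.hasDerivAt_exp (-x)).comp x ((hasDerivAt_id x).neg)
  have hd2 : HasDerivAt (fun t : ℝ => Real.exp (t - α)) (Real.exp (x - α)) x := by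
    simpa [Function.comp_def] using (Real.hasDerivAt_exp (x - α)).comp x ((hasDerivAt_id x).sub_const α)
  have hg1 : HasDerivAt (fun t : ℝ => 1 - Real.exp (-t)) (Real.exp (-x)) x := by
    simpa [Pi.sub_def] using (hasDerivAt_const x (1:ℝ)).sub hd1
  have hg2 : HasDerivAt (fun t : ℝ => 1 - Real.exp (t - α)) (-Real.exp (x - α)) x := by
    simpa [Pi.sub_def] using (hasDerivAt_const x (1:ℝ)).sub hd2
  have hl1 := hg1.log (by linarith)
  have hl2 := hg2.log (by linarith)
  have hfinal := hl1.sub hl2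
  rw [(by exact hfinal : HasDerivAt (fun t : ℝ => Real.log (1 - Real.exp (-t)) - Real.log (1 - Real.exp (t - α))) _ x).deriv]
  have p1 : 0 < Real.exp (-x) / (1 - Real.exp (-x)) :=
    div_pos (Real.exp_pos _) (by linarith)
  have p2 : 0 < Real.exp (x - α) / (1 - Real.exp (x - α)) :=
    div_pos (Real.exp_pos _) (by linarith)
  have : (0:ℝ) < Real.exp (-x) / (1 - Real.exp (-x)) - -Real.exp (x - α) / (1 - Real.exp (x - α)) := by
    rw [neg_div]; linarith
  linarith
end

section
/- Critical point identity: let N ≥ 1, let α₁,...,α_N > 0 and let δ₁,...,δ_N be defined by exp(-Σ_{j≥i} δ_j) = exp(-Σ_{j≥i} α_j) + (1 - exp(-Σ_{j≥i} α_j))·η for all i = 1,...,N, where 0 < η < 1 is a fixed constant. Then for each i, (1 - exp(-δ_i)) / (exp(-δ_i) - exp(-α_i)) = ((1-η)/η) · exp(-Σ_{j>i} α_j). In particular, the left-hand side multiplied by exp(Σ_{j>i} α_j) is independent of i. -/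
/-!
Write `F x = x + (1 - x) η`, so the hypothesis reads `exp (-Σ_{j ≥ i} δⱼ) = F (exp (-Σ_{j ≥ i} αⱼ))`.
Since `F 1 = 1`, the same relation holds for the strict tails `Σ_{j > i}`, and dividing the two
gives `e^{-δᵢ} = F (u v) / F v` with `u = e^{-αᵢ}` and `v = e^{-Σ_{j>i} αⱼ}`. Then
`1 - e^{-δᵢ} = (1 - η) v (1 - u) / F v` and `e^{-δᵢ} - u = η (1 - u) / F v`, whose quotient is the
claimed `(1 - η) / η · v`.
-/

open Finset Real

theorem one_sub_div_sub_eq_of_mul_eq {K : Type*} [Field K] {η u v d : K} (hη : η ≠ 0) (hu : u ≠ 1)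
    (hv : v + (1 - v) * η ≠ 0) (h : d * (v + (1 - v) * η) = u * v + (1 - u * v) * η) :
    (1 - d) / (d - u) = (1 - η) / η * v := by
  have hdu : (d - u) * (v + (1 - v) * η) = η * (1 - u) := by linear_combination h
  have hdu' : d - u ≠ 0 := by
    rintro h0
    rw [h0, zero_mul] at hdu
    exact mul_ne_zero hη (sub_ne_zero.mpr hu.symm) hdu.symm
  rw [div_eq_iff hdu']
  field_simp
  refine mul_right_cancel₀ hv ?_
  linear_combination (-η - (1 - η) * v) * h

section Tails

variable {ι : Type*} [LinearOrder ι] [LocallyFiniteOrderTop ι] [SuccOrder ι]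

theorem exp_neg_sum_Ioi_of_exp_neg_sum_Ici {α δ : ι → ℝ} {η : ℝ}
    (hrel : ∀ i, exp (-∑ j ∈ Ici i, δ j)
      = exp (-∑ j ∈ Ici i, α j) + (1 - exp (-∑ j ∈ Ici i, α j)) * η) (i : ι) :
    exp (-∑ j ∈ Ioi i, δ j) = exp (-∑ j ∈ Ioi i, α j) + (1 - exp (-∑ j ∈ Ioi i, α j)) * η := by
  by_cases hi : IsMax i
  · simp [Ioi_eq_empty.mpr hi]
  · rw [← Ici_succ_eq_Ioi_of_not_isMax hi]
    exact hrel _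

theorem one_sub_exp_neg_div_eq_of_exp_neg_sum_Ici {α δ : ι → ℝ} {η : ℝ} (hη : η ≠ 0)
    (hrel : ∀ i, exp (-∑ j ∈ Ici i, δ j)
      = exp (-∑ j ∈ Ici i, α j) + (1 - exp (-∑ j ∈ Ici i, α j)) * η)
    {i : ι} (hα : α i ≠ 0) :
    (1 - exp (-δ i)) / (exp (-δ i) - exp (-α i)) = (1 - η) / η * exp (-∑ j ∈ Ioi i, α j) := by
  have htail := exp_neg_sum_Ioi_of_exp_neg_sum_Ici hrel i
  have hhead := hrel i
  simp only [← add_sum_Ioi_eq_sum_Ici, neg_add, exp_add] at hhead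
  rw [htail] at hhead
  exact one_sub_div_sub_eq_of_mul_eq hη (by simpa using hα) (htail ▸ (exp_pos _).ne') hhead

end Tails

theorem critical_point_identity_general (N : ℕ) (α δ : Fin N → ℝ) (η : ℝ)
    (hα : ∀ i, 0 < α i) (hη0 : 0 < η)
    (hrel : ∀ i : Fin N,
      Real.exp (-(∑ j ∈ Finset.univ.filter (fun j => i ≤ j), δ j))
        = Real.exp (-(∑ j ∈ Finset.univ.filter (fun j => i ≤ j), α j))
          + (1 - Real.exp (-(∑ j ∈ Finset.univ.filter (fun j => i ≤ j), α j))) * η) :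
    ∀ i : Fin N,
      (1 - Real.exp (-δ i)) / (Real.exp (-δ i) - Real.exp (-α i))
        = (1 - η) / η *
            Real.exp (-(∑ j ∈ Finset.univ.filter (fun j => i < j), α j)) := by
  simp only [filter_le_eq_Ici, filter_lt_eq_Ioi] at hrel ⊢
  exact fun i => one_sub_exp_neg_div_eq_of_exp_neg_sum_Ici hη0.ne' hrel (hα i).ne'

/-- Critical point identity: if `exp(-Σ_{j≥i} δⱼ) = exp(-Σ_{j≥i} αⱼ) + (1 - exp(-Σ_{j≥i} αⱼ))·η`
for all `i`, with `0 < η < 1` and all `αᵢ > 0`, then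
`(1 - e^{-δᵢ}) / (e^{-δᵢ} - e^{-αᵢ}) = ((1-η)/η) e^{-Σ_{j>i} αⱼ}` for each `i`;
in particular the left-hand side multiplied by `e^{Σ_{j>i} αⱼ}` is independent of `i`. -/
theorem critical_point_identity (N : ℕ) (hN : 1 ≤ N) (α δ : Fin N → ℝ) (η : ℝ)
    (hα : ∀ i, 0 < α i) (hη0 : 0 < η) (hη1 : η < 1)
    (hrel : ∀ i : Fin N,
      Real.exp (-(∑ j ∈ Finset.univ.filter (fun j => i ≤ j), δ j))
        = Real.exp (-(∑ j ∈ Finset.univ.filter (fun j => i ≤ j), α j))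
          + (1 - Real.exp (-(∑ j ∈ Finset.univ.filter (fun j => i ≤ j), α j))) * η) :
    ∀ i : Fin N,
      (1 - Real.exp (-δ i)) / (Real.exp (-δ i) - Real.exp (-α i))
        = (1 - η) / η *
            Real.exp (-(∑ j ∈ Finset.univ.filter (fun j => i < j), α j)) :=
  critical_point_identity_general N α δ η hα hη0 hrel
end

section
/- Second recursive property of Φ: for vectors λ, μ of nonnegative integers with λᵢ ≤ μᵢ for all i, any index j ≥ 1 with μⱼ ≥ 1 and λⱼ ≤ μⱼ - 1, and parameters x, y, one has Φ(λ, μ - e_j; x, qy) = x · q^{Σ_{i≤j} λᵢ} · ((1-y)(1 - q^{μⱼ-λⱼ})) / ((x-y)(1 - q^{μⱼ})) · Φ(λ, μ; x, y), where e_j is the j-th standard basis vector. -/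
/-- Finite q-Pochhammer symbol `(x;q)_n = ∏_{i=0}^{n-1} (1 - x qⁱ)`. -/
noncomputable def qPoch (q x : ℝ) (n : ℕ) : ℝ :=
  ∏ i ∈ Finset.range n, (1 - x * q ^ i)

/-- Gaussian (q-)binomial coefficient. -/
noncomputable def qBinom (q : ℝ) (a b : ℕ) : ℝ :=
  if b ≤ a then qPoch q q a / (qPoch q q b * qPoch q q (a - b)) else 0

/-- The function
`Φ(λ,μ;x,y) = q^{φ(μ-λ,λ)} (y/x)^{|λ|} ((x;q)_{|λ|}(y/x;q)_{|μ|-|λ|})/(y;q)_{|μ|} ∏ᵢ binom_q(μᵢ,λᵢ)`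
with `φ(α,β) = Σ_{i<j} αᵢ βⱼ`. -/
noncomputable def Phi {N : ℕ} (q x y : ℝ) (lam mu : Fin N → ℕ) : ℝ :=
  q ^ (∑ i : Fin N, ∑ j : Fin N, if i < j then (mu i - lam i) * lam j else 0) *
    (y / x) ^ (∑ i, lam i) *
    (qPoch q x (∑ i, lam i) * qPoch q (y / x) (∑ i, (mu i - lam i))) /
    qPoch q y (∑ i, mu i) *
    ∏ i, qBinom q (mu i) (lam i)

lemma qPoch_succ_shift (q x : ℝ) (n : ℕ) :
    qPoch q x (n + 1) = (1 - x) * qPoch q (q * x) n := by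
  rw [qPoch, qPoch, Finset.prod_range_succ', pow_zero, mul_one, mul_comm]
  congr 1
  refine Finset.prod_congr rfl fun i _ => ?_
  ring

lemma qPoch_q_eq_zero (q : ℝ) (n k : ℕ) (hk1 : 1 ≤ k) (hkn : k ≤ n)
    (h : (1 : ℝ) - q ^ k = 0) : qPoch q q n = 0 := by
  apply Finset.prod_eq_zero (i := k - 1)
  · simp only [Finset.mem_range]; omega
  · have hqq : q * q ^ (k - 1) = q ^ k := by
      rw [← pow_succ']
      congr 1
      omega
    rw [hqq, h]

lemma qBinom_pred (q : ℝ) (a b : ℕ) (ha : 1 ≤ a) (hb : b ≤ a - 1)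
    (hq : (1 : ℝ) - q ^ a ≠ 0) :
    qBinom q (a - 1) b = (1 - q ^ (a - b)) * qBinom q a b / (1 - q ^ a) := by
  have hba : b ≤ a := by omega
  have hA : qPoch q q a = qPoch q q (a - 1) * (1 - q ^ a) := by
    have h1 : a = (a - 1) + 1 := by omega
    have h2 : q * q ^ (a - 1) = q ^ a := by
      rw [← pow_succ']; congr 1; omega
    conv_lhs => rw [h1]
    rw [qPoch, Finset.prod_range_succ, ← qPoch, h2]
  have hAB : qPoch q q (a - b) = qPoch q q (a - 1 - b) * (1 - q ^ (a - b)) := by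
    have h1 : a - b = (a - 1 - b) + 1 := by omega
    have h2 : q * q ^ (a - 1 - b) = q ^ (a - b) := by
      rw [← pow_succ']; congr 1; omega
    conv_lhs => rw [h1]
    rw [qPoch, Finset.prod_range_succ, ← qPoch, h2]
  rw [qBinom, qBinom, if_pos hb, if_pos hba, hA, hAB]
  set A := qPoch q q (a - 1)
  set B := qPoch q q b
  set C := qPoch q q (a - 1 - b)
  set u := (1 : ℝ) - q ^ a with hu
  set v := (1 : ℝ) - q ^ (a - b) with hv'
  rcases eq_or_ne v 0 with hv | hv
  · have hb1 : 1 ≤ b := by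
      by_contra hb0
      have hb2 : b = 0 := by omega
      apply hq
      rw [← hv, hv', hb2, Nat.sub_zero]
    have hA0 : A = 0 := qPoch_q_eq_zero q (a - 1) (a - b) (by omega) (by omega) hv
    simp [hA0, hv]
  · rcases eq_or_ne (B * C) 0 with hBC | hBC
    · have h1 : B * (C * v) = (B * C) * v := by ring
      rw [hBC, h1, hBC, zero_mul, div_zero, div_zero, mul_zero, zero_div]
    · have hB : B ≠ 0 := fun h => hBC (by rw [h, zero_mul])
      have hC : C ≠ 0 := fun h => hBC (by rw [h, mul_zero])
      field_simp

set_option maxHeartbeats 4000000 in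
/-- Second recursive property of `Φ`:
`Φ(λ, μ - e_j; x, qy) = x q^{Σ_{i≤j} λᵢ} (1-y)(1 - q^{μⱼ-λⱼ}) / ((x-y)(1 - q^{μⱼ})) · Φ(λ,μ;x,y)`. -/
theorem Phi_recursion_mu {N : ℕ} (q x y : ℝ) (lam mu : Fin N → ℕ) (j : Fin N)
    (hmuj : 1 ≤ mu j) (hle : ∀ i, lam i ≤ mu i) (hlej : lam j ≤ mu j - 1)
    (hx : x ≠ 0) (hxy : x ≠ y) (hy1 : (1 : ℝ) - y ≠ 0)
    (hden : qPoch q y (∑ i, mu i) ≠ 0)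
    (hden' : qPoch q (q * y) (∑ i, mu i - 1) ≠ 0)
    (hq : (1 : ℝ) - q ^ (mu j) ≠ 0) :
    Phi q x (q * y) lam (Function.update mu j (mu j - 1))
      = x * q ^ (∑ i ∈ Finset.univ.filter (fun i => i ≤ j), lam i) *
          ((1 - y) * (1 - q ^ (mu j - lam j))) /
          ((x - y) * (1 - q ^ (mu j))) *
          Phi q x y lam mu := by
  classical
  have hjmem : j ∈ (Finset.univ : Finset (Fin N)) := Finset.mem_univ j
  have hjd : 1 ≤ mu j - lam j := by omega
  set mu' := Function.update mu j (mu j - 1) with hmu'def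
  have hmu'j : mu' j = mu j - 1 := Function.update_self j _ mu
  have hmu'ne : ∀ i, i ≠ j → mu' i = mu i := fun i hi => Function.update_of_ne hi _ mu
  -- basic sums
  have keysum : ∀ f : Fin N → ℕ, (∑ i, f i) = f j + ∑ i ∈ Finset.univ.erase j, f i :=
    fun f => (Finset.add_sum_erase _ f hjmem).symm
  have hM1pos : 1 ≤ ∑ i, mu i := le_trans hmuj (Finset.single_le_sum (fun i _ => Nat.zero_le _) hjmem)
  have hD1pos : 1 ≤ ∑ i, (mu i - lam i) :=
    le_trans hjd (Finset.single_le_sum (f := fun i => mu i - lam i) (fun i _ => Nat.zero_le _) hjmem)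
  obtain ⟨M1, hM1⟩ : ∃ M1, ∑ i, mu i = M1 + 1 := ⟨(∑ i, mu i) - 1, by omega⟩
  obtain ⟨D1, hD1⟩ : ∃ D1, ∑ i, (mu i - lam i) = D1 + 1 := ⟨(∑ i, (mu i - lam i)) - 1, by omega⟩
  -- sums for mu'
  have hsum_mu' : ∑ i, mu' i = M1 := by
    have h1 := keysum mu'
    have h2 := keysum mu
    have h3 : ∑ i ∈ Finset.univ.erase j, mu' i = ∑ i ∈ Finset.univ.erase j, mu i :=
      Finset.sum_congr rfl fun i hi => hmu'ne i (Finset.ne_of_mem_erase hi)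
    rw [h3, hmu'j] at h1
    omega
  have hsum_d' : ∑ i, (mu' i - lam i) = D1 := by
    have h1 := keysum (fun i => mu' i - lam i)
    have h2 := keysum (fun i => mu i - lam i)
    have h3 : ∑ i ∈ Finset.univ.erase j, (mu' i - lam i)
        = ∑ i ∈ Finset.univ.erase j, (mu i - lam i) :=
      Finset.sum_congr rfl fun i hi => by rw [hmu'ne i (Finset.ne_of_mem_erase hi)]
    rw [h3, hmu'j] at h1
    omega
  -- exponent sums
  set T := ∑ j' : Fin N, (if j < j' then lam j' else 0) with hTdef
  have hrow : ∀ nu : Fin N → ℕ,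
      (∑ i : Fin N, ∑ j' : Fin N, if i < j' then (nu i - lam i) * lam j' else 0)
        = (nu j - lam j) * T + ∑ i ∈ Finset.univ.erase j,
            ∑ j' : Fin N, if i < j' then (nu i - lam i) * lam j' else 0 := by
    intro nu
    rw [keysum (fun i => ∑ j' : Fin N, if i < j' then (nu i - lam i) * lam j' else 0)]
    congr 1
    rw [hTdef, Finset.mul_sum]
    refine Finset.sum_congr rfl fun i _ => ?_
    split <;> simp
  have hE : (∑ i : Fin N, ∑ j' : Fin N, if i < j' then (mu i - lam i) * lam j' else 0)
      = (∑ i : Fin N, ∑ j' : Fin N, if i < j' then (mu' i - lam i) * lam j' else 0) + T := by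
    rw [hrow mu, hrow mu']
    have h3 : ∑ i ∈ Finset.univ.erase j,
        (∑ j' : Fin N, if i < j' then (mu' i - lam i) * lam j' else 0)
        = ∑ i ∈ Finset.univ.erase j,
        (∑ j' : Fin N, if i < j' then (mu i - lam i) * lam j' else 0) :=
      Finset.sum_congr rfl fun i hi => by rw [hmu'ne i (Finset.ne_of_mem_erase hi)]
    rw [h3, hmu'j]
    have hc : mu j - lam j = (mu j - 1 - lam j) + 1 := by omega
    rw [hc, add_mul, one_mul]
    ring
  set S := ∑ i ∈ Finset.univ.filter (fun i => i ≤ j), lam i with hSdef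
  have hLsplit : (∑ i, lam i) = S + T := by
    rw [hSdef, hTdef]
    rw [← Finset.sum_filter_add_sum_filter_not Finset.univ (fun i => i ≤ j) lam]
    congr 1
    rw [Finset.sum_filter]
    refine Finset.sum_congr rfl fun i _ => ?_
    simp [not_le]
  -- products
  have hprod' : (∏ i, qBinom q (mu' i) (lam i))
      = qBinom q (mu j - 1) (lam j) * ∏ i ∈ Finset.univ.erase j, qBinom q (mu i) (lam i) := by
    rw [← Finset.mul_prod_erase _ _ hjmem, hmu'j]
    congr 1
    exact Finset.prod_congr rfl fun i hi => by rw [hmu'ne i (Finset.ne_of_mem_erase hi)]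
  have hprod : (∏ i, qBinom q (mu i) (lam i))
      = qBinom q (mu j) (lam j) * ∏ i ∈ Finset.univ.erase j, qBinom q (mu i) (lam i) :=
    (Finset.mul_prod_erase _ _ hjmem).symm
  -- rewrite hden'
  rw [hM1, Nat.add_sub_cancel] at hden'
  -- unfold and rewrite
  unfold Phi
  rw [hsum_mu', hsum_d', hE, hprod', hprod, hM1, hD1]
  rw [qPoch_succ_shift q y M1, qPoch_succ_shift q (y / x) D1]
  rw [qBinom_pred q (mu j) (lam j) hmuj hlej hq]
  have hqyx : q * (y / x) = q * y / x := (mul_div_assoc q y x).symm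
  rw [hqyx]
  have hpow : ((q * y) / x) ^ (∑ i, lam i) = q ^ S * q ^ T * (y / x) ^ (∑ i, lam i) := by
    rw [show (q * y) / x = q * (y / x) by ring, mul_pow, hLsplit, pow_add]
  rw [hpow]
  have hyx : (1 : ℝ) - y / x = (x - y) / x := by field_simp
  rw [hyx]
  have hxysub : x - y ≠ 0 := sub_ne_zero.mpr hxy
  rw [pow_add]
  generalize (q ^ ∑ i, ∑ j, if i < j then (mu' i - lam i) * lam j else 0) = E
  generalize (y / x) ^ ∑ i, lam i = P
  generalize qPoch q x (∑ i, lam i) = X1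
  generalize qPoch q (q * y / x) D1 = X2
  generalize qBinom q (mu j) (lam j) = B1
  generalize ∏ i ∈ Finset.univ.erase j, qBinom q (mu i) (lam i) = B2
  field_simp
end

section
/- Explicit evaluation of the (1,M)-fused diagonal weight: for a nonnegative integer vector A = (A₁,...,A_N) with |A| ≤ M, a color a with 1 ≤ a ≤ N, and parameters q, z, the quantity W = Σ_{P ∈ {e₀, e_a}} Φ(C - P, C + e_a - P; q^{1-M}z, q^{-M}z) Φ(P, e_a; q^{-1}/z, q^{-1}) · q^{|A| - M} with C = A satisfies W = ((1 - q^{A_a}/z)/(1 - q^M/z)) · q^{A_{a+1} + ... + A_N}. (Here the two summands correspond to P = e₀, where the first factor uses zero vector for P, interpreted appropriately, and P = e_a.) -/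
/-!
Put `y = q^{-M} z`, so that the first factor of each summand is `Φ(·, ·; q y, y)`.
For `x = q y` the Pochhammer quotient in `Φ(λ, λ + e_a; x, y)` telescopes,
`(qy;q)_{|λ|} / (y;q)_{|λ|+1} = 1/(1-y)`,
and every q-binomial factor is `1` except the one at `a`, which is `[A_a+1]_q` or `[A_a]_q`.
The weight thus becomes `q^{A_{a+1}+⋯+A_N - M}/((1-q)(1-y))` times
`(1-q^{A_a+1})(1-z) + (1-q^{A_a})(qz-1) = (1-q)(q^{A_a}-z)`, and `q^{-M}/(1-y) = 1/(q^M-z)`.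
-/

section QPochhammer

variable (q x : ℝ)

@[simp] lemma qPoch_zero : qPoch q x 0 = 1 := by simp [qPoch]

@[simp] lemma qPoch_one : qPoch q x 1 = 1 - x := by simp [qPoch]

lemma qPoch_succ (n : ℕ) : qPoch q x (n + 1) = qPoch q x n * (1 - x * q ^ n) :=
  Finset.prod_range_succ _ n

lemma qPoch_succ' (n : ℕ) : qPoch q x (n + 1) = (1 - x) * qPoch q (q * x) n := by
  rw [qPoch, Finset.prod_range_succ', pow_zero, mul_one, mul_comm, qPoch]
  congr 1
  exact Finset.prod_congr rfl fun i _ => by ring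

variable {q x}

lemma qPoch_ne_zero_of_le {m n : ℕ} (h : m ≤ n) (hn : qPoch q x n ≠ 0) : qPoch q x m ≠ 0 := by
  obtain ⟨k, rfl⟩ := Nat.exists_eq_add_of_le h
  rw [qPoch, Finset.prod_range_add] at hn
  exact left_ne_zero_of_mul hn

lemma qPoch_self_ne_zero (hroot : ∀ n : ℕ, n ≠ 0 → q ^ n ≠ 1) (n : ℕ) : qPoch q q n ≠ 0 :=
  Finset.prod_ne_zero_iff.2 fun i _ => by
    rw [← pow_succ', sub_ne_zero]
    exact (hroot (i + 1) i.succ_ne_zero).symm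

end QPochhammer

section QBinomial

variable {q : ℝ}

lemma qBinom_self (hroot : ∀ n : ℕ, n ≠ 0 → q ^ n ≠ 1) (n : ℕ) : qBinom q n n = 1 := by
  rw [qBinom, if_pos le_rfl, Nat.sub_self, qPoch_zero, mul_one,
    div_self (qPoch_self_ne_zero hroot n)]

lemma qBinom_zero_right (hroot : ∀ n : ℕ, n ≠ 0 → q ^ n ≠ 1) (n : ℕ) : qBinom q n 0 = 1 := by
  rw [qBinom, if_pos n.zero_le, qPoch_zero, Nat.sub_zero, one_mul,
    div_self (qPoch_self_ne_zero hroot n)]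

lemma qBinom_succ_self (hroot : ∀ n : ℕ, n ≠ 0 → q ^ n ≠ 1) (n : ℕ) :
    qBinom q (n + 1) n = (1 - q ^ (n + 1)) / (1 - q) := by
  have hq1 : q ≠ 1 := by simpa using hroot 1 one_ne_zero
  have hP := qPoch_self_ne_zero hroot n
  rw [qBinom, if_pos n.le_succ, Nat.add_sub_cancel_left, qPoch_one, qPoch_succ]
  field_simp
  ring

end QBinomial

section Phi

variable {N : ℕ} {q : ℝ}

lemma sum_sum_ite_lt_single_mul (a : Fin N) (lam : Fin N → ℕ) :
    (∑ i : Fin N, ∑ j : Fin N, if i < j then (if i = a then 1 else 0) * lam j else 0)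
      = ∑ j ∈ Finset.univ.filter (fun j => a < j), lam j := by
  rw [Finset.sum_eq_single_of_mem a (Finset.mem_univ a), Finset.sum_filter]
  · simp
  · intro b _ hb
    simp [hb]

lemma Phi_zero_left (hroot : ∀ n : ℕ, n ≠ 0 → q ^ n ≠ 1) (x y : ℝ) (mu : Fin N → ℕ) :
    Phi q x y (fun _ => 0) mu = qPoch q (y / x) (∑ i, mu i) / qPoch q y (∑ i, mu i) := by
  simp [Phi, qBinom_zero_right hroot]

lemma Phi_self (hroot : ∀ n : ℕ, n ≠ 0 → q ^ n ≠ 1) (x y : ℝ) (lam : Fin N → ℕ) :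
    Phi q x y lam lam
      = (y / x) ^ (∑ i, lam i) * qPoch q x (∑ i, lam i) / qPoch q y (∑ i, lam i) := by
  simp [Phi, qBinom_self hroot]

lemma Phi_add_single (hroot : ∀ n : ℕ, n ≠ 0 → q ^ n ≠ 1) (x y : ℝ) (lam : Fin N → ℕ)
    (a : Fin N) :
    Phi q x y lam (fun i => lam i + if i = a then 1 else 0)
      = q ^ (∑ j ∈ Finset.univ.filter (fun j => a < j), lam j) * (y / x) ^ (∑ i, lam i) *
          (qPoch q x (∑ i, lam i) * (1 - y / x)) / qPoch q y (∑ i, lam i + 1) *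
          ((1 - q ^ (lam a + 1)) / (1 - q)) := by
  have hbinom : (∏ i, qBinom q (lam i + if i = a then 1 else 0) (lam i))
      = (1 - q ^ (lam a + 1)) / (1 - q) := by
    rw [Finset.prod_eq_single_of_mem a (Finset.mem_univ a), if_pos rfl,
      qBinom_succ_self hroot]
    intro b _ hb
    rw [if_neg hb, Nat.add_zero, qBinom_self hroot]
  simp only [Phi, Nat.add_sub_cancel_left, sum_sum_ite_lt_single_mul, Finset.sum_add_distrib,
    Finset.sum_ite_eq', Finset.mem_univ, if_true, qPoch_one, hbinom]

lemma Phi_mul_left_add_single (hroot : ∀ n : ℕ, n ≠ 0 → q ^ n ≠ 1) (hq : q ≠ 0) {y : ℝ}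
    (hy : y ≠ 0) (lam : Fin N → ℕ) (a : Fin N) (hden : qPoch q y (∑ i, lam i + 1) ≠ 0) :
    Phi q (q * y) y lam (fun i => lam i + if i = a then 1 else 0)
      = q ^ (∑ j ∈ Finset.univ.filter (fun j => a < j), lam j) * q⁻¹ ^ (∑ i, lam i) *
          ((1 - q⁻¹) / (1 - y)) * ((1 - q ^ (lam a + 1)) / (1 - q)) := by
  rw [qPoch_succ'] at hden
  have hyx : y / (q * y) = q⁻¹ := by field_simp
  have hP := right_ne_zero_of_mul hden
  rw [Phi_add_single hroot, hyx, qPoch_succ']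
  field_simp

lemma Phi_mul_left_sub_single (hroot : ∀ n : ℕ, n ≠ 0 → q ^ n ≠ 1) (hq : q ≠ 0) {y : ℝ}
    (hy : y ≠ 0) (mu : Fin N → ℕ) (a : Fin N) (ha : 1 ≤ mu a)
    (hden : qPoch q y (∑ i, mu i) ≠ 0) :
    Phi q (q * y) y (fun i => mu i - if i = a then 1 else 0) mu
      = q ^ (∑ j ∈ Finset.univ.filter (fun j => a < j), mu j) * (q * q⁻¹ ^ (∑ i, mu i)) *
          ((1 - q⁻¹) / (1 - y)) * ((1 - q ^ (mu a)) / (1 - q)) := by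
  set lam : Fin N → ℕ := fun i => mu i - if i = a then 1 else 0
  have hmu : mu = fun i => lam i + if i = a then 1 else 0 := by
    funext i
    by_cases hi : i = a
    · subst hi
      simp only [lam, if_pos]
      omega
    · simp [lam, hi]
  have hsum : ∑ i, mu i = ∑ i, lam i + 1 := by
    rw [hmu, Finset.sum_add_distrib, Finset.sum_ite_eq']
    simp
  have hT : ∑ j ∈ Finset.univ.filter (fun j => a < j), lam j
      = ∑ j ∈ Finset.univ.filter (fun j => a < j), mu j :=
    Finset.sum_congr rfl fun j hj => by simp [lam, ((Finset.mem_filter.1 hj).2).ne']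
  have ha' : lam a + 1 = mu a := by simp [lam]; omega
  rw [hsum] at hden ⊢
  conv_lhs => rw [hmu]
  rw [Phi_mul_left_add_single hroot hq hy lam a hden, hT, ha', pow_succ]
  field_simp

end Phi

theorem fused_diagonal_weight_general {N : ℕ} (q z : ℝ) (M : ℕ) (A : Fin N → ℕ) (a : Fin N)
    (hq : 0 < q) (hroot : ∀ n : ℕ, n ≠ 0 → q ^ n ≠ 1) (hz : z ≠ 0)
    (hAa : 1 ≤ A a)
    (hden : qPoch q (q ^ (-(M : ℤ)) * z) (∑ i, A i + 1) ≠ 0) :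
    (Phi q (q ^ ((1 : ℤ) - (M : ℤ)) * z) (q ^ (-(M : ℤ)) * z)
        A (fun i => A i + (if i = a then 1 else 0)) *
      Phi q (q ^ (-1 : ℤ) / z) (q ^ (-1 : ℤ))
        (fun _ => 0) (fun i => if i = a then 1 else 0)
      +
      Phi q (q ^ ((1 : ℤ) - (M : ℤ)) * z) (q ^ (-(M : ℤ)) * z)
        (fun i => A i - (if i = a then 1 else 0)) A *
      Phi q (q ^ (-1 : ℤ) / z) (q ^ (-1 : ℤ))
        (fun i => if i = a then 1 else 0) (fun i => if i = a then 1 else 0)) *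
      q ^ (((∑ i, A i : ℕ) : ℤ) - (M : ℤ))
      = (1 - q ^ (A a) / z) / (1 - q ^ M / z) *
          q ^ (∑ i ∈ Finset.univ.filter (fun i => a < i), A i) := by
  have hq0 : q ≠ 0 := hq.ne'
  set y := q ^ (-(M : ℤ)) * z with hy_def
  have hy : y ≠ 0 := mul_ne_zero (zpow_ne_zero _ hq0) hz
  have hx : q ^ ((1 : ℤ) - (M : ℤ)) * z = q * y := by
    rw [hy_def, sub_eq_add_neg, zpow_add₀ hq0, zpow_one, mul_assoc]
  have hMz : q ^ M ≠ z := by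
    have h1y : 1 - y ≠ 0 := by simpa using qPoch_ne_zero_of_le (Nat.le_add_left 1 _) hden
    rintro rfl
    apply h1y
    rw [hy_def, zpow_neg, zpow_natCast, inv_mul_cancel₀ (pow_ne_zero _ hq0), sub_self]
  have hq1 : q ≠ 1 := by simpa using hroot 1 one_ne_zero
  have hyx : q ^ (-1 : ℤ) / (q ^ (-1 : ℤ) / z) = z := by field_simp
  rw [hx, Phi_mul_left_add_single hroot hq0 hy A a hden,
    Phi_mul_left_sub_single hroot hq0 hy A a hAa (qPoch_ne_zero_of_le (Nat.le_succ _) hden),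
    Phi_zero_left hroot, Phi_self hroot, hyx]
  simp only [Finset.sum_ite_eq', Finset.mem_univ, if_true, qPoch_one, pow_one, zpow_neg_one,
    zpow_sub₀ hq0, zpow_natCast]
  rw [hy_def, zpow_neg, zpow_natCast, inv_pow]
  field_simp
  ring

/-- Explicit evaluation of the `(1,M)`-fused diagonal weight: with `C = A`,
`Σ_{P ∈ {e₀,e_a}} Φ(C-P, C+e_a-P; q^{1-M}z, q^{-M}z) Φ(P, e_a; q^{-1}/z, q^{-1}) · q^{|A|-M}
  = ((1 - q^{A_a}/z)/(1 - q^M/z)) q^{A_{a+1}+...+A_N}`. -/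
theorem fused_diagonal_weight {N : ℕ} (q z : ℝ) (M : ℕ) (A : Fin N → ℕ) (a : Fin N)
    (hq : 0 < q) (hroot : ∀ n : ℕ, n ≠ 0 → q ^ n ≠ 1) (hz : z ≠ 0)
    (hAa : 1 ≤ A a) (hAM : ∑ i, A i ≤ M)
    (hden : qPoch q (q ^ (-(M : ℤ)) * z) (∑ i, A i + 1) ≠ 0)
    (hden2 : (1 : ℝ) - q ^ M / z ≠ 0) :
    (Phi q (q ^ ((1 : ℤ) - (M : ℤ)) * z) (q ^ (-(M : ℤ)) * z)
        A (fun i => A i + (if i = a then 1 else 0)) *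
      Phi q (q ^ (-1 : ℤ) / z) (q ^ (-1 : ℤ))
        (fun _ => 0) (fun i => if i = a then 1 else 0)
      +
      Phi q (q ^ ((1 : ℤ) - (M : ℤ)) * z) (q ^ (-(M : ℤ)) * z)
        (fun i => A i - (if i = a then 1 else 0)) A *
      Phi q (q ^ (-1 : ℤ) / z) (q ^ (-1 : ℤ))
        (fun i => if i = a then 1 else 0) (fun i => if i = a then 1 else 0)) *
      q ^ (((∑ i, A i : ℕ) : ℤ) - (M : ℤ))
      = (1 - q ^ (A a) / z) / (1 - q ^ M / z) *
          q ^ (∑ i ∈ Finset.univ.filter (fun i => a < i), A i) :=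
  fused_diagonal_weight_general q z M A a hq hroot hz hAa hden
end
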